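/- arXiv:2112.11639 — 5 statements merged into one kernel-verified Lean document; each statement's English description precedes it below -/
import Mathlib

section
/- Let f : ℂ → ℂ be twice differentiable with f'' (x) = x · f(x) for all x (i.e., f solves the Airy equation). Then for any a ∈ ℂ and nonnegative integers m, n with n < m, the function g(x) = f^{(n)}(x + a) (the n-th derivative of f shifted by a) satisfies (L - a)^m g = 0, where L is the differential operator Lg = g'' - x·g. -/
/-!
Differentiating `f'' = x f` `n` times with Leibniz's rule gives
`f⁽ⁿ⁺²⁾ = x f⁽ⁿ⁾ + n f⁽ⁿ⁻¹⁾`, so `L - a` sends `gₙ = f⁽ⁿ⁾(· + a)` to `n gₙ₋₁`.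
Iterating, `(L - a)^m gₙ = n (n - 1) ⋯ (n - m + 1) gₙ₋ₘ`, and the falling factorial
vanishes as soon as `m > n`.
-/

section

variable {𝕜 : Type*} [NontriviallyNormedField 𝕜]

theorem iteratedDeriv_add_two_of_deriv_deriv_eq_mul {f : 𝕜 → 𝕜} {n : ℕ} (hf : ContDiff 𝕜 n f)
    (hairy : ∀ x, deriv (deriv f) x = x * f x) (x : 𝕜) :
    iteratedDeriv (n + 2) f x = x * iteratedDeriv n f x + n * iteratedDeriv (n - 1) f x := by
  -- for `n = 0` the truncated `n - 1` is harmless: its coefficient is `0`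
  rw [iteratedDeriv_succ', iteratedDeriv_succ', funext hairy,
    iteratedDeriv_fun_mul (f := fun x => x) contDiffAt_fun_id hf.contDiffAt]
  rcases n with _ | n
  · simp
  · rw [add_comm (x * _)]
    simp [Finset.sum_range_succ', iteratedDeriv_fun_id]

/-- The operator `L - a`. -/
noncomputable def shiftedAiryOp (a : 𝕜) (g : 𝕜 → 𝕜) : 𝕜 → 𝕜 :=
  fun x => deriv (deriv g) x - (x + a) * g x

theorem shiftedAiryOp_const_mul (a c : 𝕜) (g : 𝕜 → 𝕜) :
    shiftedAiryOp a (fun x => c * g x) = fun x => c * shiftedAiryOp a g x := by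
  funext x
  simp only [shiftedAiryOp, deriv_const_mul_field']
  ring

theorem shiftedAiryOp_iteratedDeriv_comp_add_const {f : 𝕜 → 𝕜} {n : ℕ} (hf : ContDiff 𝕜 n f)
    (hairy : ∀ x, deriv (deriv f) x = x * f x) (a : 𝕜) :
    shiftedAiryOp a (fun x => iteratedDeriv n f (x + a))
      = fun x => n * iteratedDeriv (n - 1) f (x + a) := by
  funext x
  have hderiv : ∀ k, deriv (fun x => iteratedDeriv k f (x + a))
      = fun x => iteratedDeriv (k + 1) f (x + a) := fun k => by
    funext y; rw [deriv_comp_add_const, iteratedDeriv_succ]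
  simp only [shiftedAiryOp, hderiv, iteratedDeriv_add_two_of_deriv_deriv_eq_mul hf hairy]
  ring

theorem iterate_shiftedAiryOp_iteratedDeriv_comp_add_const {f : 𝕜 → 𝕜} {n : ℕ}
    (hf : ContDiff 𝕜 n f) (hairy : ∀ x, deriv (deriv f) x = x * f x) (a : 𝕜) (k : ℕ) :
    (shiftedAiryOp a)^[k] (fun x => iteratedDeriv n f (x + a))
      = fun x => n.descFactorial k * iteratedDeriv (n - k) f (x + a) := by
  induction k with
  | zero => simp
  | succ k ih =>
    rw [Function.iterate_succ_apply', ih, shiftedAiryOp_const_mul,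
      shiftedAiryOp_iteratedDeriv_comp_add_const (hf.of_le (by exact_mod_cast n.sub_le k)) hairy,
      Nat.descFactorial_succ, Nat.sub_sub]
    funext x
    push_cast
    ring

end

/-- If `f : ℂ → ℂ` is smooth and solves the Airy equation `f'' = x f`, then for any
`a ∈ ℂ` and `n < m`, the function `x ↦ f⁽ⁿ⁾(x + a)` is annihilated by `(L - a)^m`,
where `L g = g'' - x g`. -/
theorem stmt_4 (f : ℂ → ℂ) (hf : ContDiff ℂ ⊤ f)
    (hairy : ∀ x, deriv (deriv f) x = x * f x)
    (a : ℂ) (m n : ℕ) (hnm : n < m) :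
    (fun g : ℂ → ℂ => fun x => deriv (deriv g) x - (x + a) * g x)^[m]
      (fun x => iteratedDeriv n f (x + a)) = 0 := by
  change (shiftedAiryOp a)^[m] _ = 0
  rw [iterate_shiftedAiryOp_iteratedDeriv_comp_add_const (hf.of_le le_top) hairy,
    Nat.descFactorial_eq_zero_iff_lt.mpr hnm]
  funext x
  simp
end

section
/- Let P be the differential operator P f = x f'' - f' - x² f acting on smooth functions on an open set avoiding x = 0, and let P* be its formal adjoint, P* g = (x g)'' + g' - x² g. Then for every smooth function f, P*( (1/x²) · (P f) ) = f'''' - 2x f'' - 2f' + x² f, i.e., P* ∘ (1/x²) ∘ P = (L)², where L f = f'' - x f. -/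
/-- The differential operator `P f = x f'' - f' - x² f`. -/
noncomputable def Pop (f : ℝ → ℝ) : ℝ → ℝ :=
  fun x => x * deriv (deriv f) x - deriv f x - x ^ 2 * f x

/-- The formal adjoint `P* g = (x g)'' + g' - x² g`. -/
noncomputable def Pstar (g : ℝ → ℝ) : ℝ → ℝ :=
  fun x => deriv (deriv (fun y => y * g y)) x + deriv g x - x ^ 2 * g x

/-- The factorization `P* ∘ (1/x²) ∘ P = L²`: for smooth `f` and `x ≠ 0`,
`P*((1/x²)·(P f))(x) = f''''(x) - 2x f''(x) - 2 f'(x) + x² f(x)`. -/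
theorem stmt_6 (f : ℝ → ℝ) (hf : ContDiff ℝ (⊤ : ℕ∞) f) :
    ∀ x : ℝ, x ≠ 0 →
      Pstar (fun y => (1 / y ^ 2) * Pop f y) x =
        iteratedDeriv 4 f x - 2 * x * deriv (deriv f) x - 2 * deriv f x
          + x ^ 2 * f x := by
  intro x hx
  set f1 := deriv f with hf1def
  set f2 := deriv f1 with hf2def
  set f3 := deriv f2 with hf3def
  set f4 := deriv f3 with hf4def
  have hcf0 : ContDiff ℝ (⊤ : ℕ∞) f := hf.of_le (by simp)
  have hcf1 : ContDiff ℝ (⊤ : ℕ∞) f1 := (contDiff_infty_iff_deriv.mp hcf0).2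
  have hcf2 : ContDiff ℝ (⊤ : ℕ∞) f2 := (contDiff_infty_iff_deriv.mp hcf1).2
  have hcf3 : ContDiff ℝ (⊤ : ℕ∞) f3 := (contDiff_infty_iff_deriv.mp hcf2).2
  have hD0 : ∀ y : ℝ, HasDerivAt f (f1 y) y := fun y => (hcf0.differentiable (by norm_num) y).hasDerivAt
  have hD1 : ∀ y : ℝ, HasDerivAt f1 (f2 y) y := fun y => (hcf1.differentiable (by norm_num) y).hasDerivAt
  have hD2 : ∀ y : ℝ, HasDerivAt f2 (f3 y) y := fun y => (hcf2.differentiable (by norm_num) y).hasDerivAt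
  have hD3 : ∀ y : ℝ, HasDerivAt f3 (f4 y) y := fun y => (hcf3.differentiable (by norm_num) y).hasDerivAt
  set g : ℝ → ℝ := fun y => (1 / y ^ 2) * Pop f y with hgdef
  set G : ℝ → ℝ := fun y => f2 y / y - f1 y / y ^ 2 - f y with hGdef
  set A : ℝ → ℝ := fun y => f2 y - f1 y / y - y * f y with hAdef
  set B : ℝ → ℝ := fun y =>
    f3 y - (f2 y * y - f1 y) / y ^ 2 - (f y + y * f1 y) with hBdef
  -- g = G on the complement of 0
  have hgG : ∀ y : ℝ, y ≠ 0 → g y = G y := by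
    intro y hy
    simp only [hgdef, hGdef, Pop]
    field_simp
    ring
  -- y * g y = A y on complement of 0
  have hxgA : ∀ y : ℝ, y ≠ 0 → y * g y = A y := by
    intro y hy
    simp only [hgdef, hAdef, Pop]
    field_simp
    ring
  -- deriv of A
  have hAderiv : ∀ y : ℝ, y ≠ 0 → HasDerivAt A (B y) y := by
    intro y hy
    have h1 : HasDerivAt (fun z => f1 z / z) ((f2 y * y - f1 y * 1) / y ^ 2) y :=
      (hD1 y).div (hasDerivAt_id y) hy
    have h2 : HasDerivAt (fun z => z * f z) (1 * f y + y * f1 y) y :=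
      (hasDerivAt_id y).mul (hD0 y)
    have : HasDerivAt (fun z => f2 z - f1 z / z - z * f z) _ y := ((hD2 y).sub h1).sub h2
    convert this using 1
    simp only [hBdef]
    ring
  -- deriv (fun z => z * g z) y = B y for y ≠ 0
  have hderiv_xg : ∀ y : ℝ, y ≠ 0 → deriv (fun z => z * g z) y = B y := by
    intro y hy
    have hev : (fun z => z * g z) =ᶠ[nhds y] A :=
      Filter.eventually_of_mem (isOpen_ne.mem_nhds hy) (fun z hz => hxgA z hz)
    rw [hev.deriv_eq]
    exact (hAderiv y hy).deriv
  -- second derivative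
  have hBx : HasDerivAt B
      (f4 x - ((f3 x * x + f2 x * 1 - f2 x) * x ^ 2 - (f2 x * x - f1 x) * ((2 : ℕ) * x ^ (2 - 1))) / (x ^ 2) ^ 2
        - (f1 x + (1 * f1 x + x * f2 x))) x := by
    have hnum : HasDerivAt (fun y => f2 y * y - f1 y) (f3 x * x + f2 x * 1 - f2 x) x :=
      ((hD2 x).mul (hasDerivAt_id x)).sub (hD1 x)
    have hden : HasDerivAt (fun y : ℝ => y ^ 2) ((2 : ℕ) * x ^ (2 - 1)) x := hasDerivAt_pow 2 x
    have hdiv := hnum.div hden (pow_ne_zero 2 hx)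
    have h3 : HasDerivAt (fun y => f y + y * f1 y) (f1 x + (1 * f1 x + x * f2 x)) x :=
      (hD0 x).add ((hasDerivAt_id x).mul (hD1 x))
    exact ((hD3 x).sub hdiv).sub h3
  have hsecond : deriv (deriv (fun z => z * g z)) x =
      f4 x - ((f3 x * x + f2 x * 1 - f2 x) * x ^ 2 - (f2 x * x - f1 x) * ((2 : ℕ) * x ^ (2 - 1))) / (x ^ 2) ^ 2
        - (f1 x + (1 * f1 x + x * f2 x)) := by
    have hev : deriv (fun z => z * g z) =ᶠ[nhds x] B :=
      Filter.eventually_of_mem (isOpen_ne.mem_nhds hx) (fun z hz => hderiv_xg z hz)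
    rw [hev.deriv_eq]
    exact hBx.deriv
  -- first derivative of g
  have hGx : HasDerivAt G
      ((f3 x * x - f2 x * 1) / x ^ 2
        - (f2 x * x ^ 2 - f1 x * ((2 : ℕ) * x ^ (2 - 1))) / (x ^ 2) ^ 2 - f1 x) x := by
    have h1 : HasDerivAt (fun z => f2 z / z) ((f3 x * x - f2 x * 1) / x ^ 2) x :=
      (hD2 x).div (hasDerivAt_id x) hx
    have h2 : HasDerivAt (fun z => f1 z / z ^ 2)
        ((f2 x * x ^ 2 - f1 x * ((2 : ℕ) * x ^ (2 - 1))) / (x ^ 2) ^ 2) x :=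
      (hD1 x).div (hasDerivAt_pow 2 x) (pow_ne_zero 2 hx)
    exact (h1.sub h2).sub (hD0 x)
  have hfirst : deriv g x =
      (f3 x * x - f2 x * 1) / x ^ 2
        - (f2 x * x ^ 2 - f1 x * ((2 : ℕ) * x ^ (2 - 1))) / (x ^ 2) ^ 2 - f1 x := by
    have hev : g =ᶠ[nhds x] G :=
      Filter.eventually_of_mem (isOpen_ne.mem_nhds hx) (fun z hz => hgG z hz)
    rw [hev.deriv_eq]
    exact hGx.deriv
  have hiter : iteratedDeriv 4 f x = f4 x := by
    simp only [hf4def, hf3def, hf2def, hf1def]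
    simp [iteratedDeriv_succ, iteratedDeriv_zero]
  simp only [Pstar]
  rw [hsecond, hfirst, hiter]
  simp only [hgdef, Pop]
  field_simp
  ring
end

section
/- For ℓ, m ≥ 0, the ℂ-vector space spanned by the operators Lʲxᵏ + xᵏLʲ for 0 ≤ j ≤ ℓ and 0 ≤ k ≤ m in the first Weyl algebra, where L = ∂² - x, has dimension exactly (ℓ+1)(m+1); i.e., the operators {Lʲxᵏ + xᵏLʲ : 0 ≤ j ≤ ℓ, 0 ≤ k ≤ m} are ℂ-linearly independent. -/
open Polynomial

/-- Multiplication by `X` on `ℂ[X]`, as an endomorphism (the generator `x` of the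
first Weyl algebra in its standard faithful representation). -/
noncomputable def xop : Module.End ℂ (Polynomial ℂ) := LinearMap.mulLeft ℂ (X : Polynomial ℂ)

/-- Differentiation on `ℂ[X]` (the generator `∂`, which satisfies `[∂, x] = 1`). -/
noncomputable def dop : Module.End ℂ (Polynomial ℂ) := Polynomial.derivative

/-- The Airy operator `L = ∂² - x` in the first Weyl algebra. -/
noncomputable def Lop : Module.End ℂ (Polynomial ℂ) := dop ^ 2 - xop

lemma Lop_apply (p : Polynomial ℂ) :
    Lop p = derivative (derivative p) - X * p := by
  simp [Lop, dop, xop, pow_two, LinearMap.sub_apply, Module.End.mul_apply]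

lemma coeff_Lop (p : Polynomial ℂ) (s : ℕ) :
    (Lop p).coeff s = p.coeff (s+2) * ((s+2) * (s+1)) - (X * p).coeff s := by
  rw [Lop_apply]
  simp [coeff_derivative]
  ring

lemma lowA (j : ℕ) : ∀ n s : ℕ, s + 2*j < n → ((Lop^j) (X^n : Polynomial ℂ)).coeff s = 0 := by
  induction j with
  | zero =>
    intro n s h
    simp only [pow_zero, Module.End.one_apply, coeff_X_pow]
    simp only [if_neg (by omega : ¬ s = n)]
  | succ j ih =>
    intro n s h
    have e : (Lop^(j+1)) (X^n : Polynomial ℂ) = Lop ((Lop^j) (X^n)) := by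
      rw [pow_succ', Module.End.mul_apply]
    rw [e, coeff_Lop, ih n (s+2) (by omega)]
    have h2 : (X * (Lop^j) (X^n : Polynomial ℂ)).coeff s = 0 := by
      cases s with
      | zero => simp [mul_coeff_zero]
      | succ s => rw [coeff_X_mul]; exact ih n s (by omega)
    rw [h2]; ring

lemma lowB (j : ℕ) : ∀ s : ℕ, ((Lop^j) (X^(s + 2*j) : Polynomial ℂ)).coeff s
    = ((s + 2*j).descFactorial (2*j) : ℂ) := by
  induction j with
  | zero => intro s; simp
  | succ j ih =>
    intro s
    have e : (Lop^(j+1)) (X^(s + 2*(j+1)) : Polynomial ℂ) = Lop ((Lop^j) (X^((s+2) + 2*j))) := by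
      rw [show s + 2*(j+1) = (s+2) + 2*j from by omega, pow_succ', Module.End.mul_apply]
    rw [e, coeff_Lop, ih (s+2)]
    have h2 : (X * (Lop^j) (X^((s+2) + 2*j) : Polynomial ℂ)).coeff s = 0 := by
      cases s with
      | zero => simp [mul_coeff_zero]
      | succ s => rw [coeff_X_mul]; exact lowA j _ s (by omega)
    rw [h2]
    have h3 : s + 2*(j+1) = s + 2 + 2*j := by omega
    have h4 : 2*(j+1) = (2*j + 1) + 1 := by omega
    rw [h3, h4, Nat.descFactorial_succ, Nat.descFactorial_succ,
      show s + 2 + 2*j - (2*j+1) = s + 1 by omega, show s + 2 + 2*j - 2*j = s + 2 by omega]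
    push_cast
    ring

lemma coeff_v (j k n t : ℕ) :
    (((Lop^j * xop^k + xop^k * Lop^j : Module.End ℂ (Polynomial ℂ))) (X^n : Polynomial ℂ)).coeff t
    = ((Lop^j) (X^(n+k) : Polynomial ℂ)).coeff t
      + ((X:Polynomial ℂ)^k * (Lop^j) (X^n : Polynomial ℂ)).coeff t := by
  have hx : (xop^k : Module.End ℂ (Polynomial ℂ)) = LinearMap.mulLeft ℂ ((X:Polynomial ℂ)^k) := by
    rw [xop, LinearMap.pow_mulLeft]
  rw [LinearMap.add_apply, Module.End.mul_apply, Module.End.mul_apply, hx,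
    LinearMap.mulLeft_apply, LinearMap.mulLeft_apply, ← pow_add, coeff_add,
    show k + n = n + k from by omega]

lemma coeff_xpow_mul (k t : ℕ) (p : Polynomial ℂ) :
    ((X:Polynomial ℂ)^k * p).coeff t = if k ≤ t then p.coeff (t - k) else 0 := by
  rw [mul_comm, coeff_mul_X_pow']

lemma mu_mono {L a b c e : ℕ} (hc : c ≤ L) (h : a < b ∨ (a = b ∧ c < e)) :
    a * (L + 1) + c < b * (L + 1) + e := by
  rcases h with h | ⟨rfl, h⟩
  · have h1 : (a+1)*(L+1) = a*(L+1) + (L+1) := by ring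
    have h2 : (a+1)*(L+1) ≤ b*(L+1) := Nat.mul_le_mul_right _ h
    omega
  · omega

/-- The operators `Lʲxᵏ + xᵏLʲ`, `0 ≤ j ≤ ℓ`, `0 ≤ k ≤ m`, are ℂ-linearly
independent; hence their span has dimension exactly `(ℓ+1)(m+1)`. -/
theorem stmt_12 (ℓ m : ℕ) :
    LinearIndependent ℂ
      (fun p : Fin (ℓ + 1) × Fin (m + 1) =>
        Lop ^ (p.1 : ℕ) * xop ^ (p.2 : ℕ) + xop ^ (p.2 : ℕ) * Lop ^ (p.1 : ℕ)) := by
  classical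
  rw [Fintype.linearIndependent_iff]
  intro g hg
  have hco : ∀ n t : ℕ, (∑ q : Fin (ℓ+1) × Fin (m+1), g q *
      ( ((Lop^(q.1:ℕ)) (X^(n+(q.2:ℕ)) : Polynomial ℂ)).coeff t
        + ((X:Polynomial ℂ)^(q.2:ℕ) * ((Lop^(q.1:ℕ)) (X^n : Polynomial ℂ))).coeff t )) = 0 := by
    intro n t
    have h0 := congrArg
      (fun f : Module.End ℂ (Polynomial ℂ) => ((f (X^n : Polynomial ℂ)).coeff t)) hg
    simp only [LinearMap.sum_apply, LinearMap.smul_apply, LinearMap.zero_apply,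
      finset_sum_coeff, coeff_smul, coeff_zero, smul_eq_mul] at h0
    rw [← h0]
    exact Finset.sum_congr rfl (fun q _ => by rw [coeff_v])
  have main : ∀ N : ℕ, ∀ p : Fin (ℓ+1) × Fin (m+1),
      ((p.2:ℕ) + 2*(ℓ - (p.1:ℕ))) * (ℓ+1) + (ℓ - (p.1:ℕ)) < N → g p = 0 := by
    intro N
    induction N with
    | zero => intro p h; omega
    | succ N ih =>
      intro p hp
      have hjl : (p.1:ℕ) ≤ ℓ := by have := p.1.isLt; omega
      obtain ⟨d, hd⟩ : ∃ d, (p.2:ℕ) + 2*(ℓ - (p.1:ℕ)) = d := ⟨_, rfl⟩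
      rw [hd] at hp
      have IH : ∀ q : Fin (ℓ+1) × Fin (m+1),
          ((q.2:ℕ) + 2*(ℓ - (q.1:ℕ))) * (ℓ+1) + (ℓ - (q.1:ℕ))
            < d * (ℓ+1) + (ℓ - (p.1:ℕ)) → g q = 0 := fun q h => ih q (by omega)
      have key : ∀ r : ℕ, (∑ q ∈ Finset.univ.filter
            (fun q : Fin (ℓ+1) × Fin (m+1) => (q.2:ℕ) + 2*(ℓ - (q.1:ℕ)) = d),
            (g q) * (((descPochhammer ℂ (2*(q.1:ℕ))).comp (X + C ((q.2:ℕ):ℂ))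
              + descPochhammer ℂ (2*(q.1:ℕ))).eval (((r + 2*ℓ : ℕ)) : ℂ))) = 0 := by
        intro r
        rw [Finset.sum_filter]
        refine Eq.trans (Finset.sum_congr rfl ?_) (hco (r + 2*ℓ) (r + d))
        intro q _
        have hq1 : (q.1:ℕ) ≤ ℓ := by have := q.1.isLt; omega
        by_cases hv : (q.2:ℕ) + 2*(ℓ - (q.1:ℕ)) = d
        · rw [if_pos hv]
          congr 1
          rw [eval_add, eval_comp, eval_add, eval_X, eval_C,
            show (((r+2*ℓ : ℕ)) : ℂ) + (((q.2:ℕ) : ℕ) : ℂ) = (((r+2*ℓ) + (q.2:ℕ) : ℕ) : ℂ)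
              from by push_cast; ring,
            descPochhammer_eval_eq_descFactorial, descPochhammer_eval_eq_descFactorial,
            show (r+2*ℓ) + (q.2:ℕ) = (r+d) + 2*(q.1:ℕ) from by omega, lowB,
            coeff_xpow_mul, if_pos (show (q.2:ℕ) ≤ r + d from by omega),
            show r + d - (q.2:ℕ) = r + 2*(ℓ - (q.1:ℕ)) from by omega,
            show r + 2*ℓ = (r + 2*(ℓ - (q.1:ℕ))) + 2*(q.1:ℕ) from by omega, lowB]
        · rw [if_neg hv]
          by_cases hlt : (q.2:ℕ) + 2*(ℓ - (q.1:ℕ)) < d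
          · rw [IH q (mu_mono (by omega) (Or.inl hlt)), zero_mul]
          · have hc1 : ((Lop^(q.1:ℕ)) (X^((r+2*ℓ)+(q.2:ℕ)) : Polynomial ℂ)).coeff (r+d) = 0 :=
              lowA _ _ _ (by omega)
            have hc2 : ((X:Polynomial ℂ)^(q.2:ℕ) *
                ((Lop^(q.1:ℕ)) (X^(r+2*ℓ) : Polynomial ℂ))).coeff (r+d) = 0 := by
              rw [coeff_xpow_mul]
              split_ifs with h
              · exact lowA _ _ _ (by omega)
              · rfl
            rw [hc1, hc2]; ring
      have hQ0 : (∑ q ∈ Finset.univ.filter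
            (fun q : Fin (ℓ+1) × Fin (m+1) => (q.2:ℕ) + 2*(ℓ - (q.1:ℕ)) = d),
            C (g q) * ((descPochhammer ℂ (2*(q.1:ℕ))).comp (X + C ((q.2:ℕ):ℂ))
              + descPochhammer ℂ (2*(q.1:ℕ)))) = 0 := by
        apply eq_zero_of_infinite_isRoot
        refine Set.infinite_of_injective_forall_mem
          (f := fun r : ℕ => (((r + 2*ℓ : ℕ)) : ℂ)) ?_ ?_
        · intro a b hab
          have : a + 2*ℓ = b + 2*ℓ := Nat.cast_injective hab
          omega
        · intro r
          show IsRoot _ _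
          unfold IsRoot
          rw [eval_finset_sum]
          rw [← key r]
          exact Finset.sum_congr rfl (fun q _ => by rw [eval_mul, eval_C])
      have hpmem : p ∈ Finset.univ.filter
          (fun q : Fin (ℓ+1) × Fin (m+1) => (q.2:ℕ) + 2*(ℓ - (q.1:ℕ)) = d) :=
        Finset.mem_filter.mpr ⟨Finset.mem_univ p, hd⟩
      have hcf := congrArg (fun h : Polynomial ℂ => h.coeff (2*(p.1:ℕ))) hQ0
      simp only [finset_sum_coeff, coeff_zero] at hcf
      rw [Finset.sum_eq_single p] at hcf
      · rw [coeff_C_mul] at hcf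
        have hPp : (((descPochhammer ℂ (2*(p.1:ℕ))).comp (X + C ((p.2:ℕ):ℂ))
            + descPochhammer ℂ (2*(p.1:ℕ)))).coeff (2*(p.1:ℕ)) = 2 := by
          have m1 : ((descPochhammer ℂ (2*(p.1:ℕ))).comp
              (X + C ((p.2:ℕ):ℂ))).natDegree = 2*(p.1:ℕ) := by
            rw [natDegree_comp, descPochhammer_natDegree, natDegree_X_add_C, mul_one]
          have c1 : ((descPochhammer ℂ (2*(p.1:ℕ))).comp
              (X + C ((p.2:ℕ):ℂ))).coeff (2*(p.1:ℕ)) = 1 := by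
            have h0 := Polynomial.Monic.coeff_natDegree
              ((monic_descPochhammer ℂ (2*(p.1:ℕ))).comp_X_add_C ((p.2:ℕ):ℂ))
            rwa [m1] at h0
          have c2 : (descPochhammer ℂ (2*(p.1:ℕ))).coeff (2*(p.1:ℕ)) = 1 := by
            have h0 := Polynomial.Monic.coeff_natDegree (monic_descPochhammer ℂ (2*(p.1:ℕ)))
            rwa [descPochhammer_natDegree] at h0
          rw [coeff_add, c1, c2]
          norm_num
        rw [hPp] at hcf
        have := mul_eq_zero.mp hcf
        rcases this with h | h
        · exact h
        · norm_num at h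
      · intro q hqS hqp
        have hqd := (Finset.mem_filter.mp hqS).2
        have hq1 : (q.1:ℕ) ≤ ℓ := by have := q.1.isLt; omega
        rw [coeff_C_mul]
        rcases lt_trichotomy (q.1:ℕ) (p.1:ℕ) with h | h | h
        · have hdeg : (((descPochhammer ℂ (2*(q.1:ℕ))).comp (X + C ((q.2:ℕ):ℂ))
              + descPochhammer ℂ (2*(q.1:ℕ)))).natDegree < 2*(p.1:ℕ) := by
            apply lt_of_le_of_lt (natDegree_add_le _ _)
            have m1 : ((descPochhammer ℂ (2*(q.1:ℕ))).comp
                (X + C ((q.2:ℕ):ℂ))).natDegree = 2*(q.1:ℕ) := by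
              rw [natDegree_comp, descPochhammer_natDegree, natDegree_X_add_C, mul_one]
            rw [m1, descPochhammer_natDegree]
            omega
          rw [coeff_eq_zero_of_natDegree_lt hdeg, mul_zero]
        · exfalso
          apply hqp
          have hk : (q.2:ℕ) = (p.2:ℕ) := by omega
          exact Prod.ext (Fin.ext h) (Fin.ext hk)
        · rw [IH q (mu_mono (by omega) (Or.inr ⟨by omega, by omega⟩)), zero_mul]
      · intro hnot
        exact absurd hpmem hnot
  intro i
  exact main (((i.2:ℕ) + 2*(ℓ - (i.1:ℕ))) * (ℓ+1) + (ℓ - (i.1:ℕ)) + 1) i (by omega)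
end

section
/- Let A₁(x,∂) and A₂(x,∂) be linear differential operators with smooth coefficients and A = A₁A₂. Then the bilinear concomitant satisfies C_A(f, g; x) = C_{A₁}(A₂f, g; x) + C_{A₂}(f, A₁*g; x) for all smooth f, g, where C_R(f,g;p) = ∑_{j=1}^m ∑_{k=0}^{j-1} (-1)^k f^{(j-1-k)}(p) (d_j g)^{(k)}(p) for R = ∑ⱼ dⱼ∂ʲ of order m, and A₁* is the formal adjoint. -/
/-- The action of the differential operator `∑_{j=0}^m dⱼ(x) ∂ʲ` on a function. -/
noncomputable def applyOp (m : ℕ) (d : ℕ → ℝ → ℝ) (f : ℝ → ℝ) : ℝ → ℝ :=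
  fun x => ∑ j ∈ Finset.range (m + 1), d j x * iteratedDeriv j f x

/-- The formal adjoint `R* g = ∑ⱼ (-1)ʲ (dⱼ g)⁽ʲ⁾`. -/
noncomputable def adjOp (m : ℕ) (d : ℕ → ℝ → ℝ) (g : ℝ → ℝ) : ℝ → ℝ :=
  fun x => ∑ j ∈ Finset.range (m + 1), (-1 : ℝ) ^ j * iteratedDeriv j (fun y => d j y * g y) x

/-- The bilinear concomitant
`C_R(f,g;p) = ∑_{j=1}^m ∑_{k=0}^{j-1} (-1)^k f⁽ʲ⁻¹⁻ᵏ⁾(p) (dⱼ g)⁽ᵏ⁾(p)`. -/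
noncomputable def concomitant (m : ℕ) (d : ℕ → ℝ → ℝ) (f g : ℝ → ℝ) (p : ℝ) : ℝ :=
  ∑ j ∈ Finset.Icc 1 m, ∑ k ∈ Finset.range j,
    (-1 : ℝ) ^ k * iteratedDeriv (j - 1 - k) f p * iteratedDeriv k (fun y => d j y * g y) p

open scoped ContDiff

namespace Stmt13Aux

lemma smooth_iter {f : ℝ → ℝ} (hf : ContDiff ℝ ∞ f) (n : ℕ) : ContDiff ℝ ∞ (iteratedDeriv n f) := by
  rw [iteratedDeriv_eq_iterate]; exact ContDiff.iterate_deriv n hf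

lemma hasDerivAt_iter {f : ℝ → ℝ} (hf : ContDiff ℝ ∞ f) (n : ℕ) (x : ℝ) :
    HasDerivAt (iteratedDeriv n f) (iteratedDeriv (n+1) f x) x := by
  rw [iteratedDeriv_succ]
  exact ((contDiff_infty_iff_deriv.mp (smooth_iter hf n)).1 x).hasDerivAt

lemma iter_zero (n : ℕ) : iteratedDeriv n (fun _ : ℝ => (0:ℝ)) = fun _ => 0 := by
  induction n with
  | zero => rfl
  | succ n ih => rw [iteratedDeriv_succ, ih]; exact deriv_const' 0

lemma iter_eventuallyEq {f₁ f₂ : ℝ → ℝ} {x : ℝ} (h : f₁ =ᶠ[nhds x] f₂) (n : ℕ) :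
    iteratedDeriv n f₁ =ᶠ[nhds x] iteratedDeriv n f₂ := by
  induction n with
  | zero => simpa [iteratedDeriv_zero] using h
  | succ n ih => simpa [iteratedDeriv_succ] using ih.deriv

lemma iter_finset_sum {ι : Type*} (s : Finset ι) (F : ι → ℝ → ℝ)
    (hF : ∀ i ∈ s, ContDiff ℝ ∞ (F i)) (n : ℕ) :
    iteratedDeriv n (fun x => ∑ i ∈ s, F i x) = fun x => ∑ i ∈ s, iteratedDeriv n (F i) x := by
  induction n with
  | zero => simp [iteratedDeriv_zero]
  | succ n ih =>
    rw [iteratedDeriv_succ, ih]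
    funext x
    have : HasDerivAt (fun y => ∑ i ∈ s, iteratedDeriv n (F i) y)
        (∑ i ∈ s, iteratedDeriv (n+1) (F i) x) x :=
      HasDerivAt.fun_sum fun i hi => hasDerivAt_iter (hF i hi) n x
    rw [this.deriv]

lemma applyOp_smooth {m : ℕ} {d : ℕ → ℝ → ℝ} {f : ℝ → ℝ}
    (hd : ∀ j, ContDiff ℝ ∞ (d j)) (hf : ContDiff ℝ ∞ f) : ContDiff ℝ ∞ (applyOp m d f) :=
  ContDiff.sum fun j _ => (hd j).mul (smooth_iter hf j)

lemma adjOp_smooth {m : ℕ} {d : ℕ → ℝ → ℝ} {g : ℝ → ℝ}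
    (hd : ∀ j, ContDiff ℝ ∞ (d j)) (hg : ContDiff ℝ ∞ g) : ContDiff ℝ ∞ (adjOp m d g) :=
  ContDiff.sum fun j _ => contDiff_const.mul (smooth_iter ((hd j).mul hg) j)


lemma lagrange (m : ℕ) (d : ℕ → ℝ → ℝ) (f g : ℝ → ℝ)
    (hd : ∀ j, ContDiff ℝ ∞ (d j)) (hf : ContDiff ℝ ∞ f) (hg : ContDiff ℝ ∞ g) (x : ℝ) :
    HasDerivAt (fun p => concomitant m d f g p)
      (g x * applyOp m d f x - f x * adjOp m d g x) x := by
  have key : ∀ j ∈ Finset.Icc 1 m, ∀ k ∈ Finset.range j,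
      HasDerivAt (fun p => (-1:ℝ)^k * iteratedDeriv (j-1-k) f p
          * iteratedDeriv k (fun y => d j y * g y) p)
        (((-1:ℝ)^k * iteratedDeriv (j-k) f x * iteratedDeriv k (fun y => d j y * g y) x)
          - ((-1:ℝ)^(k+1) * iteratedDeriv (j-(k+1)) f x
              * iteratedDeriv (k+1) (fun y => d j y * g y) x)) x := by
    intro j hj k hk
    have hu : ContDiff ℝ ∞ (fun y => d j y * g y) := (hd j).mul hg
    have hk' : k < j := Finset.mem_range.mp hk
    have h1 := ((hasDerivAt_iter hf (j-1-k) x).const_mul ((-1:ℝ)^k)).mul (hasDerivAt_iter hu k x)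
    refine h1.congr_deriv ?_
    have e1 : j - 1 - k + 1 = j - k := by omega
    have e2 : j - (k+1) = j - 1 - k := by omega
    rw [e2, ← e1, pow_succ]
    ring
  have H : HasDerivAt (fun p => concomitant m d f g p)
      (∑ j ∈ Finset.Icc 1 m, ∑ k ∈ Finset.range j,
        (((-1:ℝ)^k * iteratedDeriv (j-k) f x * iteratedDeriv k (fun y => d j y * g y) x)
          - ((-1:ℝ)^(k+1) * iteratedDeriv (j-(k+1)) f x
              * iteratedDeriv (k+1) (fun y => d j y * g y) x))) x := by
    have := HasDerivAt.fun_sum (fun j hj => HasDerivAt.fun_sum (fun k hk => key j hj k hk))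
    exact this
  convert H using 1
  have tel : ∀ j ∈ Finset.Icc 1 m,
      ∑ k ∈ Finset.range j,
        (((-1:ℝ)^k * iteratedDeriv (j-k) f x * iteratedDeriv k (fun y => d j y * g y) x)
          - ((-1:ℝ)^(k+1) * iteratedDeriv (j-(k+1)) f x
              * iteratedDeriv (k+1) (fun y => d j y * g y) x))
      = iteratedDeriv j f x * (d j x * g x)
          - (-1:ℝ)^j * f x * iteratedDeriv j (fun y => d j y * g y) x := by
    intro j hj
    have := Finset.sum_range_sub' (fun k => (-1:ℝ)^k * iteratedDeriv (j-k) f x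
        * iteratedDeriv k (fun y => d j y * g y) x) j
    rw [this]
    simp [iteratedDeriv_zero, Nat.sub_self]
  rw [Finset.sum_congr rfl tel]
  have hins : Finset.range (m+1) = insert 0 (Finset.Icc 1 m) := by
    ext a; simp [Finset.mem_range, Finset.mem_Icc]; omega
  show g x * applyOp m d f x - f x * adjOp m d g x = _
  have h0 : (0:ℕ) ∉ Finset.Icc 1 m := by simp
  simp only [applyOp, adjOp, hins]
  rw [Finset.sum_insert h0, Finset.sum_insert h0]
  simp only [iteratedDeriv_zero, pow_zero, one_mul]
  rw [Finset.sum_sub_distrib, mul_add, mul_add, Finset.mul_sum, Finset.mul_sum]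
  rw [show (∑ j ∈ Finset.Icc 1 m, g x * (d j x * iteratedDeriv j f x))
      = ∑ j ∈ Finset.Icc 1 m, iteratedDeriv j f x * (d j x * g x) from
    Finset.sum_congr rfl fun j _ => by ring]
  rw [show (∑ j ∈ Finset.Icc 1 m, f x * ((-1:ℝ)^j * iteratedDeriv j (fun y => d j y * g y) x))
      = ∑ j ∈ Finset.Icc 1 m, (-1:ℝ)^j * f x * iteratedDeriv j (fun y => d j y * g y) x from
    Finset.sum_congr rfl fun j _ => by ring]
  ring

lemma exists_expand (a : ℝ → ℝ) (ha : ContDiff ℝ ∞ a) :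
    ∀ i : ℕ, ∃ c : ℕ → ℝ → ℝ, (∀ n, ContDiff ℝ ∞ (c n)) ∧
      ∀ h : ℝ → ℝ, ContDiff ℝ ∞ h → ∀ x,
        iteratedDeriv i (fun y => a y * h y) x
          = ∑ n ∈ Finset.range (i+1), c n x * iteratedDeriv n h x := by
  intro i
  induction i with
  | zero =>
    exact ⟨fun _ => a, fun _ => ha, fun h hh x => by simp [iteratedDeriv_zero]⟩
  | succ i ih =>
    obtain ⟨c, hcs, hce⟩ := ih
    refine ⟨fun n x => (if n ≤ i then deriv (c n) x else 0)
        + (if n = 0 then 0 else c (n-1) x), ?_, ?_⟩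
    · intro n
      apply ContDiff.add
      · by_cases hn : n ≤ i
        · simpa [hn] using (contDiff_infty_iff_deriv.mp (hcs n)).2
        · simpa [hn] using contDiff_const
      · by_cases hn : n = 0
        · simpa [hn] using contDiff_const
        · simpa [hn] using hcs (n-1)
    · intro h hh x
      have hrw : iteratedDeriv i (fun y => a y * h y)
          = fun y => ∑ n ∈ Finset.range (i+1), c n y * iteratedDeriv n h y :=
        funext (hce h hh)
      have hder : HasDerivAt (fun y => ∑ n ∈ Finset.range (i+1), c n y * iteratedDeriv n h y)
          (∑ n ∈ Finset.range (i+1),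
            (deriv (c n) x * iteratedDeriv n h x + c n x * iteratedDeriv (n+1) h x)) x := by
        apply HasDerivAt.fun_sum
        intro n _
        exact (((contDiff_infty_iff_deriv.mp (hcs n)).1 x).hasDerivAt).mul (hasDerivAt_iter hh n x)
      have hval : iteratedDeriv (i+1) (fun y => a y * h y) x
          = ∑ n ∈ Finset.range (i+1),
            (deriv (c n) x * iteratedDeriv n h x + c n x * iteratedDeriv (n+1) h x) := by
        rw [iteratedDeriv_succ, hrw, hder.deriv]
      rw [hval]
      have e1 : ∑ n ∈ Finset.range (i+1+1), (if n ≤ i then deriv (c n) x else 0)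
            * iteratedDeriv n h x
          = ∑ n ∈ Finset.range (i+1), deriv (c n) x * iteratedDeriv n h x := by
        rw [Finset.sum_range_succ, if_neg (by omega), zero_mul, add_zero]
        exact Finset.sum_congr rfl fun n hn => by
          rw [if_pos (Nat.lt_succ_iff.mp (Finset.mem_range.mp hn))]
      have e2 : ∑ n ∈ Finset.range (i+1+1), (if n = 0 then 0 else c (n-1) x)
            * iteratedDeriv n h x
          = ∑ n ∈ Finset.range (i+1), c n x * iteratedDeriv (n+1) h x := by
        rw [Finset.sum_range_succ']
        simp
      calc ∑ n ∈ Finset.range (i+1),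
            (deriv (c n) x * iteratedDeriv n h x + c n x * iteratedDeriv (n+1) h x)
          = (∑ n ∈ Finset.range (i+1), deriv (c n) x * iteratedDeriv n h x)
            + ∑ n ∈ Finset.range (i+1), c n x * iteratedDeriv (n+1) h x := by
            rw [Finset.sum_add_distrib]
        _ = ∑ n ∈ Finset.range (i+1+1),
              ((if n ≤ i then deriv (c n) x else 0) + (if n = 0 then 0 else c (n-1) x))
                * iteratedDeriv n h x := by
            simp only [add_mul]
            rw [Finset.sum_add_distrib, e1, e2]

lemma iter_iter (n j : ℕ) (h : ℝ → ℝ) :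
    iteratedDeriv n (iteratedDeriv j h) = iteratedDeriv (n + j) h := by
  simp only [iteratedDeriv_eq_iterate]
  exact (Function.iterate_add_apply deriv n j h).symm

lemma exists_expand_op (m₁ m₂ : ℕ) (d₁ d₂ : ℕ → ℝ → ℝ)
    (hd₁ : ∀ j, ContDiff ℝ ∞ (d₁ j)) (hd₂ : ∀ j, ContDiff ℝ ∞ (d₂ j)) :
    ∃ C : ℕ → ℝ → ℝ, ∀ h : ℝ → ℝ, ContDiff ℝ ∞ h → ∀ x,
      applyOp m₁ d₁ (applyOp m₂ d₂ h) x
        = ∑ n ∈ Finset.range (m₁ + m₂ + 1), C n x * iteratedDeriv n h x := by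
  choose c hce using fun j => exists_expand (d₂ j) (hd₂ j)
  refine ⟨fun N x => ∑ i ∈ Finset.range (m₁+1), ∑ j ∈ Finset.range (m₂+1),
      ∑ n ∈ Finset.range (i+1), if N = n + j then d₁ i x * c j i n x else 0, ?_⟩
  intro h hh x
  have step1 : ∀ i, iteratedDeriv i (applyOp m₂ d₂ h) x
      = ∑ j ∈ Finset.range (m₂+1), ∑ n ∈ Finset.range (i+1),
          c j i n x * iteratedDeriv (n + j) h x := by
    intro i
    have : applyOp m₂ d₂ h = fun y => ∑ j ∈ Finset.range (m₂+1),
        (fun y => d₂ j y * iteratedDeriv j h y) y := rfl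
    rw [this, iter_finset_sum _ _ (fun j _ => (hd₂ j).mul (smooth_iter hh j))]
    refine Finset.sum_congr rfl fun j _ => ?_
    rw [(hce j i).2 (iteratedDeriv j h) (smooth_iter hh j) x]
    exact Finset.sum_congr rfl fun n _ => by rw [iter_iter]
  show ∑ i ∈ Finset.range (m₁+1), d₁ i x * iteratedDeriv i (applyOp m₂ d₂ h) x = _
  calc ∑ i ∈ Finset.range (m₁+1), d₁ i x * iteratedDeriv i (applyOp m₂ d₂ h) x
      = ∑ i ∈ Finset.range (m₁+1), ∑ j ∈ Finset.range (m₂+1),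
          ∑ n ∈ Finset.range (i+1), d₁ i x * c j i n x * iteratedDeriv (n + j) h x := by
        refine Finset.sum_congr rfl fun i _ => ?_
        rw [step1 i, Finset.mul_sum]
        refine Finset.sum_congr rfl fun j _ => ?_
        rw [Finset.mul_sum]
        exact Finset.sum_congr rfl fun n _ => by ring
    _ = ∑ i ∈ Finset.range (m₁+1), ∑ j ∈ Finset.range (m₂+1), ∑ n ∈ Finset.range (i+1),
          ∑ N ∈ Finset.range (m₁+m₂+1),
            (if N = n + j then d₁ i x * c j i n x else 0) * iteratedDeriv N h x := by
        refine Finset.sum_congr rfl fun i hi => Finset.sum_congr rfl fun j hj =>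
          Finset.sum_congr rfl fun n hn => ?_
        simp only [ite_mul, zero_mul]
        rw [Finset.sum_ite_eq' (Finset.range (m₁+m₂+1)) (n+j)
          (fun N => d₁ i x * c j i n x * iteratedDeriv N h x)]
        rw [if_pos]
        simp only [Finset.mem_range] at hi hj hn ⊢
        omega
    _ = ∑ N ∈ Finset.range (m₁+m₂+1),
          (∑ i ∈ Finset.range (m₁+1), ∑ j ∈ Finset.range (m₂+1), ∑ n ∈ Finset.range (i+1),
            if N = n + j then d₁ i x * c j i n x else 0) * iteratedDeriv N h x := by
        symm
        simp only [Finset.sum_mul, ite_mul, zero_mul]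
        refine Eq.trans Finset.sum_comm ?_
        refine Finset.sum_congr rfl fun i hi => ?_
        refine Eq.trans Finset.sum_comm ?_
        refine Finset.sum_congr rfl fun j hj => ?_
        refine Eq.trans Finset.sum_comm ?_
        refine Finset.sum_congr rfl fun n hn => ?_
        rw [Finset.sum_ite_eq' (Finset.range (m₁+m₂+1)) (n+j)
          (fun N => d₁ i x * c j i n x * iteratedDeriv N h x), if_pos]
        simp only [Finset.mem_range] at hi hj hn ⊢
        omega

lemma iter_monomial (c : ℝ) (N : ℕ) : ∀ n : ℕ,
    iteratedDeriv n (fun y : ℝ => (y - c)^N)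
      = fun y => (N.descFactorial n : ℝ) * (y - c)^(N - n) := by
  intro n
  induction n with
  | zero => funext y; simp [iteratedDeriv_zero]
  | succ n ih =>
    rw [iteratedDeriv_succ, ih]
    funext y
    have h1 : HasDerivAt (fun y : ℝ => (y - c)^(N - n))
        ((N - n : ℕ) * (y - c)^(N - n - 1) * 1) y :=
      ((hasDerivAt_id y).sub_const c).pow (N - n)
    have h2 := h1.const_mul (N.descFactorial n : ℝ)
    rw [h2.deriv, Nat.descFactorial_succ]
    have e : N - n - 1 = N - (n+1) := by omega
    rw [e]
    push_cast
    ring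

lemma iter_monomial_self (c : ℝ) (N n : ℕ) :
    iteratedDeriv n (fun y : ℝ => (y - c)^N) c = if n = N then (N.factorial : ℝ) else 0 := by
  simp only [iter_monomial]
  rcases lt_trichotomy n N with h | h | h
  · rw [if_neg (by omega), sub_self, zero_pow (by omega), mul_zero]
  · subst h
    rw [if_pos rfl, Nat.sub_self, pow_zero, mul_one, Nat.descFactorial_self]
  · rw [if_neg (by omega), Nat.descFactorial_eq_zero_iff_lt.mpr h]
    simp

lemma hcomp_infty (m₁ m₂ m : ℕ) (d₁ d₂ d : ℕ → ℝ → ℝ)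
    (hd₁ : ∀ j, ContDiff ℝ ∞ (d₁ j)) (hd₂ : ∀ j, ContDiff ℝ ∞ (d₂ j))
    (hcomp : ∀ h : ℝ → ℝ, ContDiff ℝ (⊤ : ℕ∞) h →
      applyOp m d h = applyOp m₁ d₁ (applyOp m₂ d₂ h)) :
    ∀ h : ℝ → ℝ, ContDiff ℝ ∞ h → ∀ x,
      applyOp m d h x = applyOp m₁ d₁ (applyOp m₂ d₂ h) x := by
  obtain ⟨C, hC⟩ := exists_expand_op m₁ m₂ d₁ d₂ hd₁ hd₂
  have hmono : ∀ (x : ℝ) (N : ℕ), ContDiff ℝ (⊤ : ℕ∞) (fun y : ℝ => (y - x)^N) :=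
    fun x N => (contDiff_id.sub contDiff_const).pow N
  have hext : ∀ (x : ℝ) (N : ℕ),
      (if N ∈ Finset.range (m+1) then d N x * (N.factorial : ℝ) else 0)
        = if N ∈ Finset.range (m₁+m₂+1) then C N x * (N.factorial : ℝ) else 0 := by
    intro x N
    have h1 := congrFun (hcomp _ (hmono x N)) x
    rw [hC _ ((hmono x N).of_le (by simp)) x] at h1
    simpa only [applyOp, iter_monomial_self, mul_ite, mul_zero, Finset.sum_ite_eq'] using h1
  have hext' : ∀ (x : ℝ) (N : ℕ),
      (if N ∈ Finset.range (m+1) then d N x else 0)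
        = if N ∈ Finset.range (m₁+m₂+1) then C N x else 0 := by
    intro x N
    have hne : (N.factorial : ℝ) ≠ 0 := Nat.cast_ne_zero.mpr N.factorial_ne_zero
    have := hext x N
    split_ifs at this ⊢ with h1 h2 h2
    · exact mul_right_cancel₀ hne this
    · exact (mul_eq_zero.mp this).resolve_right hne
    · exact ((mul_eq_zero.mp this.symm).resolve_right hne).symm
    · rfl
  intro h hh x
  rw [hC h hh x]
  set M := max m (m₁ + m₂) with hM
  have pad : ∀ (k : ℕ) (F : ℕ → ℝ), k ≤ M →
      ∑ n ∈ Finset.range (k+1), F n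
        = ∑ n ∈ Finset.range (M+1), if n ∈ Finset.range (k+1) then F n else 0 := by
    intro k F hk
    rw [Finset.sum_ite_mem]
    have : Finset.range (M+1) ∩ Finset.range (k+1) = Finset.range (k+1) := by
      ext a; simp; omega
    rw [this]
  show ∑ n ∈ Finset.range (m+1), d n x * iteratedDeriv n h x = _
  rw [pad m _ (le_max_left _ _), pad (m₁+m₂) _ (le_max_right _ _)]
  refine Finset.sum_congr rfl fun n _ => ?_
  have := hext' x n
  split_ifs at this ⊢ with h1 h2 h2
  · rw [this]
  · rw [this, zero_mul]
  · rw [← this, zero_mul]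
  · rfl

lemma concomitant_congr (m : ℕ) (d : ℕ → ℝ → ℝ) (g : ℝ → ℝ) {f₁ f₂ : ℝ → ℝ} {x : ℝ}
    (h : f₁ =ᶠ[nhds x] f₂) : concomitant m d f₁ g x = concomitant m d f₂ g x := by
  unfold concomitant
  refine Finset.sum_congr rfl fun j _ => Finset.sum_congr rfl fun k _ => ?_
  rw [(iter_eventuallyEq h (j-1-k)).eq_of_nhds]

lemma applyOp_eventuallyEq (m : ℕ) (d : ℕ → ℝ → ℝ) {h₁ h₂ : ℝ → ℝ} {x : ℝ}
    (h : h₁ =ᶠ[nhds x] h₂) : applyOp m d h₁ =ᶠ[nhds x] applyOp m d h₂ := by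
  have H : ∀ᶠ y in nhds x, ∀ j ∈ Finset.range (m+1),
      iteratedDeriv j h₁ y = iteratedDeriv j h₂ y :=
    (Filter.eventually_all_finset _).mpr fun j _ => iter_eventuallyEq h j
  filter_upwards [H] with y hy
  exact Finset.sum_congr rfl fun j hj => by rw [hy j hj]

lemma concomitant_zero (m : ℕ) (d : ℕ → ℝ → ℝ) (g : ℝ → ℝ) (x : ℝ) :
    concomitant m d (fun _ => (0:ℝ)) g x = 0 := by
  unfold concomitant
  refine Finset.sum_eq_zero fun j _ => Finset.sum_eq_zero fun k _ => ?_
  rw [iter_zero]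
  simp

lemma applyOp_zero (m : ℕ) (d : ℕ → ℝ → ℝ) :
    applyOp m d (fun _ => (0:ℝ)) = fun _ => 0 := by
  funext x
  refine Finset.sum_eq_zero fun j _ => ?_
  rw [iter_zero]
  simp

section Main

variable (m₁ m₂ m : ℕ) (d₁ d₂ d : ℕ → ℝ → ℝ) (g : ℝ → ℝ)

/-- The difference whose vanishing is the claim. -/
noncomputable def Phi (h : ℝ → ℝ) : ℝ → ℝ := fun p =>
  concomitant m d h g p - concomitant m₁ d₁ (applyOp m₂ d₂ h) g p
    - concomitant m₂ d₂ h (adjOp m₁ d₁ g) p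

/-- The adjoint defect. -/
noncomputable def Edef : ℝ → ℝ := fun x =>
  adjOp m₂ d₂ (adjOp m₁ d₁ g) x - adjOp m d g x

variable (hd₁ : ∀ j, ContDiff ℝ ∞ (d₁ j)) (hd₂ : ∀ j, ContDiff ℝ ∞ (d₂ j))
  (hd : ∀ j, ContDiff ℝ ∞ (d j)) (hg : ContDiff ℝ ∞ g)

include hd₁ hd₂ hd hg in
lemma phi_hasDeriv
    (hcomp' : ∀ h : ℝ → ℝ, ContDiff ℝ ∞ h → ∀ x,
      applyOp m d h x = applyOp m₁ d₁ (applyOp m₂ d₂ h) x)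
    (h : ℝ → ℝ) (hh : ContDiff ℝ ∞ h) (x : ℝ) :
    HasDerivAt (Phi m₁ m₂ m d₁ d₂ d g h)
      (h x * Edef m₁ m₂ m d₁ d₂ d g x) x := by
  have H1 := lagrange m d h g hd hh hg x
  have H2 := lagrange m₁ d₁ (applyOp m₂ d₂ h) g hd₁ (applyOp_smooth hd₂ hh) hg x
  have H3 := lagrange m₂ d₂ h (adjOp m₁ d₁ g) hd₂ hh (adjOp_smooth hd₁ hg) x
  have H := (H1.sub H2).sub H3
  refine H.congr_deriv ?_
  unfold Edef
  rw [hcomp' h hh x]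
  ring

lemma phi_eventually_zero {t : ℝ} {h : ℝ → ℝ} (ht : h =ᶠ[nhds t] fun _ => 0) :
    Phi m₁ m₂ m d₁ d₂ d g h t = 0 := by
  unfold Phi
  rw [concomitant_congr m d g ht,
    concomitant_congr m₁ d₁ g (applyOp_eventuallyEq m₂ d₂ ht),
    concomitant_congr m₂ d₂ (adjOp m₁ d₁ g) ht,
    applyOp_zero, concomitant_zero, concomitant_zero, concomitant_zero]
  ring

include hd₁ hd₂ hd hg in
lemma Edef_zero
    (hcomp' : ∀ h : ℝ → ℝ, ContDiff ℝ ∞ h → ∀ x,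
      applyOp m d h x = applyOp m₁ d₁ (applyOp m₂ d₂ h) x) :
    ∀ x, Edef m₁ m₂ m d₁ d₂ d g x = 0 := by
  intro x₁
  by_contra hne
  set E : ℝ → ℝ := Edef m₁ m₂ m d₁ d₂ d g with hEdef
  have hEc : Continuous E :=
    ((adjOp_smooth hd₂ (adjOp_smooth hd₁ hg)).sub (adjOp_smooth hd hg)).continuous
  have hKc : Continuous fun y => E y * E x₁ := hEc.mul continuous_const
  have hopen : IsOpen {y : ℝ | 0 < E y * E x₁} := isOpen_lt continuous_const hKc
  have hx₁ : x₁ ∈ {y : ℝ | 0 < E y * E x₁} := by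
    simpa using mul_self_pos.mpr hne
  obtain ⟨δ, hδ, hball⟩ := Metric.isOpen_iff.mp hopen x₁ hx₁
  set φb : ContDiffBump x₁ := ⟨δ/4, δ/2, by linarith, by linarith⟩ with hφb
  set φ : ℝ → ℝ := fun y => φb y with hφ
  have hφs : ContDiff ℝ ∞ φ := φb.contDiff
  set Φ : ℝ → ℝ := Phi m₁ m₂ m d₁ d₂ d g φ with hΦ
  have hder : ∀ x, HasDerivAt Φ (φ x * E x) x :=
    fun x => phi_hasDeriv m₁ m₂ m d₁ d₂ d g hd₁ hd₂ hd hg hcomp' φ hφs x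
  have hout : φb.rOut = δ/2 := rfl
  have hev : ∀ t : ℝ, δ/2 < dist t x₁ → φ =ᶠ[nhds t] fun _ => 0 := by
    intro t ht
    by_cases htmem : t ∈ tsupport φ
    · rw [φb.tsupport_eq, Metric.mem_closedBall, hout] at htmem
      linarith
    · exact notMem_tsupport_iff_eventuallyEq.mp htmem
  have hdista : dist (x₁ - δ) x₁ = δ := by
    rw [Real.dist_eq]; rw [abs_of_nonpos (by linarith)]; ring
  have hdistb : dist (x₁ + δ) x₁ = δ := by
    rw [Real.dist_eq]; rw [abs_of_nonneg (by linarith)]; ring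
  have ha : Φ (x₁ - δ) = 0 :=
    phi_eventually_zero m₁ m₂ m d₁ d₂ d g (hev _ (by rw [hdista]; linarith))
  have hb : Φ (x₁ + δ) = 0 :=
    phi_eventually_zero m₁ m₂ m d₁ d₂ d g (hev _ (by rw [hdistb]; linarith))
  have hintegrable : IntervalIntegrable (fun y => φ y * E y) MeasureTheory.volume
      (x₁ - δ) (x₁ + δ) := (hφs.continuous.mul hEc).intervalIntegrable _ _
  have hint : ∫ y in (x₁ - δ)..(x₁ + δ), φ y * E y = 0 := by
    rw [intervalIntegral.integral_eq_sub_of_hasDerivAt (fun x _ => hder x) hintegrable, ha, hb]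
    ring
  have hint2 : ∫ y in (x₁ - δ)..(x₁ + δ), φ y * E y * E x₁ = 0 := by
    rw [intervalIntegral.integral_mul_const, hint, zero_mul]
  have hnonneg : ∀ y, 0 ≤ φ y * E y * E x₁ := by
    intro y
    by_cases hy : dist y x₁ < δ
    · have hpos := hball (Metric.mem_ball.mpr hy)
      rw [mul_assoc]
      exact mul_nonneg φb.nonneg (le_of_lt hpos)
    · push_neg at hy
      have : φ y = 0 := φb.zero_of_le_dist (by rw [hout]; linarith)
      rw [this, zero_mul, zero_mul]
  have hpos : 0 < ∫ y in (x₁ - δ)..(x₁ + δ), φ y * E y * E x₁ := by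
    rw [intervalIntegral.integral_pos_iff_support_of_nonneg_ae
      (Filter.Eventually.of_forall hnonneg)
      (((hφs.continuous.mul hEc).mul continuous_const).intervalIntegrable _ _)]
    refine ⟨by linarith, ?_⟩
    have hsub : Set.Ioo (x₁ - δ/4) (x₁ + δ/4)
        ⊆ Function.support (fun y => φ y * E y * E x₁) ∩ Set.Ioc (x₁ - δ) (x₁ + δ) := by
      intro y hy
      obtain ⟨hy1, hy2⟩ := hy
      have hdy : dist y x₁ ≤ δ/4 := by
        rw [Real.dist_eq, abs_le]; constructor <;> linarith
      have hφ1 : φ y = 1 := φb.one_of_mem_closedBall (Metric.mem_closedBall.mpr hdy)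
      have hEy : 0 < E y * E x₁ :=
        hball (Metric.mem_ball.mpr (by rw [Real.dist_eq, abs_lt]; constructor <;> linarith))
      constructor
      · simp only [Function.mem_support]
        rw [hφ1, one_mul]
        exact ne_of_gt hEy
      · constructor <;> [linarith; linarith]
    calc (0:ENNReal) < MeasureTheory.volume (Set.Ioo (x₁ - δ/4) (x₁ + δ/4)) := by
          rw [Real.volume_Ioo]
          exact ENNReal.ofReal_pos.mpr (by linarith)
      _ ≤ _ := MeasureTheory.measure_mono hsub
  exact (ne_of_gt hpos) hint2

end Main
end Stmt13Aux

open Stmt13Aux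

/-- If `A = A₁ A₂` (as operators on smooth functions), then
`C_A(f,g;x) = C_{A₁}(A₂f, g; x) + C_{A₂}(f, A₁* g; x)`. -/
theorem stmt_13 (m₁ m₂ m : ℕ) (d₁ d₂ d : ℕ → ℝ → ℝ)
    (hd₁ : ∀ j, ContDiff ℝ (⊤ : ℕ∞) (d₁ j)) (hd₂ : ∀ j, ContDiff ℝ (⊤ : ℕ∞) (d₂ j))
    (hd : ∀ j, ContDiff ℝ (⊤ : ℕ∞) (d j))
    (hcomp : ∀ h : ℝ → ℝ, ContDiff ℝ (⊤ : ℕ∞) h →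
      applyOp m d h = applyOp m₁ d₁ (applyOp m₂ d₂ h))
    (f g : ℝ → ℝ) (hf : ContDiff ℝ (⊤ : ℕ∞) f) (hg : ContDiff ℝ (⊤ : ℕ∞) g) :
    ∀ x : ℝ,
      concomitant m d f g x =
        concomitant m₁ d₁ (applyOp m₂ d₂ f) g x
          + concomitant m₂ d₂ f (adjOp m₁ d₁ g) x := by
  intro x₀
  have hd₁' : ∀ j, ContDiff ℝ (⊤ : ℕ∞) (d₁ j) := fun j => (hd₁ j).of_le (by simp)
  have hd₂' : ∀ j, ContDiff ℝ (⊤ : ℕ∞) (d₂ j) := fun j => (hd₂ j).of_le (by simp)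
  have hd' : ∀ j, ContDiff ℝ (⊤ : ℕ∞) (d j) := fun j => (hd j).of_le (by simp)
  have hg' : ContDiff ℝ (⊤ : ℕ∞) g := hg.of_le (by simp)
  have hf' : ContDiff ℝ (⊤ : ℕ∞) f := hf.of_le (by simp)
  have hcomp' := hcomp_infty m₁ m₂ m d₁ d₂ d hd₁' hd₂' hcomp
  have hE := Edef_zero m₁ m₂ m d₁ d₂ d g hd₁' hd₂' hd' hg' hcomp'
  set χb : ContDiffBump x₀ := ⟨1, 2, one_pos, one_lt_two⟩ with hχb
  set h : ℝ → ℝ := fun y => χb y * f y with hh_def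
  have hh : ContDiff ℝ (⊤ : ℕ∞) h := χb.contDiff.mul hf'
  have hder : ∀ x, HasDerivAt (Phi m₁ m₂ m d₁ d₂ d g h) 0 x := by
    intro x
    have := phi_hasDeriv m₁ m₂ m d₁ d₂ d g hd₁' hd₂' hd' hg' hcomp' h hh x
    rwa [hE x, mul_zero] at this
  have hconst := is_const_of_deriv_eq_zero (fun x => (hder x).differentiableAt)
    (fun x => (hder x).deriv) x₀ (x₀ + 3)
  have hfar : h =ᶠ[nhds (x₀ + 3)] fun _ => 0 := by
    have hnt : (x₀ + 3) ∉ tsupport (fun y => χb y) := by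
      rw [χb.tsupport_eq, Metric.mem_closedBall, Real.dist_eq]
      rw [show x₀ + 3 - x₀ = 3 by ring]
      norm_num
    have := notMem_tsupport_iff_eventuallyEq.mp hnt
    filter_upwards [this] with y hy
    show χb y * f y = 0
    rw [show χb y = 0 from hy, zero_mul]
  have hzero : Phi m₁ m₂ m d₁ d₂ d g h (x₀ + 3) = 0 :=
    phi_eventually_zero m₁ m₂ m d₁ d₂ d g hfar
  have hnear : f =ᶠ[nhds x₀] h := by
    filter_upwards [χb.eventuallyEq_one] with y hy
    show f y = χb y * f y
    rw [show χb y = 1 from hy, one_mul]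
  have hPhieq : Phi m₁ m₂ m d₁ d₂ d g f x₀ = Phi m₁ m₂ m d₁ d₂ d g h x₀ := by
    unfold Phi
    rw [concomitant_congr m d g hnear,
      concomitant_congr m₁ d₁ g (applyOp_eventuallyEq m₂ d₂ hnear),
      concomitant_congr m₂ d₂ (adjOp m₁ d₁ g) hnear]
  have hfinal : Phi m₁ m₂ m d₁ d₂ d g f x₀ = 0 := by
    rw [hPhieq, hconst, hzero]
  unfold Phi at hfinal
  linarith
end

section
/- Let d ≥ 1 and equip the 4d-dimensional space V = ker((L - a)^{2d}) (where L y = y'' - x y, a ∈ ℂ) with basis {Ai^{(j)}(x+a), Bi^{(j)}(x+a) : 0 ≤ j ≤ 2d-1} and symplectic form ω given by ω(Ai^{(m)}, Bi^{(n)}) = m! n!/π if m + n = 2d - 1 and 0 otherwise, ω(Bi^{(m)}, Ai^{(n)}) = -m! n!/π if m+n = 2d-1 and 0 otherwise, and ω vanishing on pairs (Ai^{(m)}, Ai^{(n)}) and (Bi^{(m)}, Bi^{(n)}). Then ω is a nondegenerate alternating bilinear form on V. -/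
/-- The structure constants of the symplectic form on `ker((L-a)^{2d})` in the basis
`{Ai⁽ᵐ⁾(x+a), Bi⁽ⁿ⁾(x+a) : 0 ≤ m,n ≤ 2d-1}`: an index `(0, m)` stands for `Ai⁽ᵐ⁾(x+a)`
and `(1, n)` for `Bi⁽ⁿ⁾(x+a)`; the pairing is `m! n!/π` when `m + n = 2d - 1` (with sign
depending on the order), and `0` otherwise. -/
noncomputable def airyForm (d : ℕ) (i j : Fin 2 × Fin (2 * d)) : ℂ :=
  if i.1 = 0 ∧ j.1 = 1 ∧ (i.2 : ℕ) + (j.2 : ℕ) = 2 * d - 1 then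
    (((i.2 : ℕ).factorial * (j.2 : ℕ).factorial : ℕ) : ℂ) / (Real.pi : ℂ)
  else if i.1 = 1 ∧ j.1 = 0 ∧ (i.2 : ℕ) + (j.2 : ℕ) = 2 * d - 1 then
    -((((i.2 : ℕ).factorial * (j.2 : ℕ).factorial : ℕ) : ℂ) / (Real.pi : ℂ))
  else 0

/-- The bilinear form `ω` on the `4d`-dimensional space `V = ker((L-a)^{2d})`
(coordinates with respect to the basis above). -/
noncomputable def airyOmega (d : ℕ) (v w : (Fin 2 × Fin (2 * d)) → ℂ) : ℂ :=
  ∑ i, ∑ j, v i * w j * airyForm d i j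

lemma airyForm_antisymm (d : ℕ) (i j : Fin 2 × Fin (2 * d)) :
    airyForm d j i = - airyForm d i j := by
  unfold airyForm
  have hc : (j.2 : ℕ) + (i.2 : ℕ) = (i.2 : ℕ) + (j.2 : ℕ) := Nat.add_comm _ _
  have hf : ((j.2 : ℕ).factorial * (i.2 : ℕ).factorial : ℕ)
      = ((i.2 : ℕ).factorial * (j.2 : ℕ).factorial : ℕ) := Nat.mul_comm _ _
  have h01 : ∀ x : Fin 2, x = 0 → x = 1 → False := by decide
  split_ifs with h1 h2 h3 h4 <;> simp_all

lemma airyOmega_single (d : ℕ) (v : (Fin 2 × Fin (2 * d)) → ℂ)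
    (j : Fin 2 × Fin (2 * d)) :
    airyOmega d v (Pi.single j 1) = ∑ i, v i * airyForm d i j := by
  unfold airyOmega
  refine Finset.sum_congr rfl fun i _ => ?_
  rw [Finset.sum_eq_single j]
  · simp
  · intro b _ hb; simp [Pi.single_apply, hb]
  · simp

/-- For `d ≥ 1`, `ω` is a nondegenerate alternating bilinear form on `V`. -/
theorem stmt_16 (d : ℕ) (hd : 1 ≤ d) :
    (∀ v : (Fin 2 × Fin (2 * d)) → ℂ, airyOmega d v v = 0) ∧
    (∀ v : (Fin 2 × Fin (2 * d)) → ℂ, (∀ w, airyOmega d v w = 0) → v = 0) := by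
  constructor
  · intro v
    have h : airyOmega d v v = - airyOmega d v v := by
      unfold airyOmega
      calc ∑ i, ∑ j, v i * v j * airyForm d i j
          = ∑ i, ∑ j, -(v j * v i * airyForm d j i) := by
            refine Finset.sum_congr rfl fun i _ => Finset.sum_congr rfl fun j _ => ?_
            rw [airyForm_antisymm]; ring
        _ = -∑ i, ∑ j, v j * v i * airyForm d j i := by
            simp
        _ = -∑ j, ∑ i, v i * v j * airyForm d i j := by rw [Finset.sum_comm]
        _ = -∑ i, ∑ j, v i * v j * airyForm d i j := neg_inj.mpr Finset.sum_comm
    linear_combination h / 2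
  · intro v hv
    have hpi : (Real.pi : ℂ) ≠ 0 := by
      exact_mod_cast Complex.ofReal_ne_zero.mpr Real.pi_ne_zero
    have key : ∀ j, ∑ i, v i * airyForm d i j = 0 := by
      intro j; rw [← airyOmega_single]; exact hv _
    funext i
    obtain ⟨i1, i2⟩ := i
    -- complement index
    have hi2 : (i2 : ℕ) < 2 * d := i2.isLt
    set n : Fin (2 * d) := ⟨2 * d - 1 - (i2 : ℕ), by omega⟩ with hn
    have hsum : (i2 : ℕ) + (n : ℕ) = 2 * d - 1 := by simp [hn]; omega
    fin_cases i1
    · -- v (0, i2) = 0 : test against j = (1, n)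
      have h := key (1, n)
      rw [Fintype.sum_prod_type, Fin.sum_univ_two] at h
      have h2 : ∀ m : Fin (2 * d), v (1, m) * airyForm d (1, m) (1, n) = 0 := by
        intro m; simp [airyForm]
      rw [Finset.sum_congr rfl (fun m _ => h2 m)] at h
      simp only [Finset.sum_const_zero, add_zero] at h
      have h3 : ∀ m : Fin (2 * d),
          v (0, m) * airyForm d (0, m) (1, n)
            = if m = i2 then v (0, m) * ((((m : ℕ).factorial * (n : ℕ).factorial : ℕ) : ℂ) / (Real.pi : ℂ)) else 0 := by
        intro m
        by_cases hm : m = i2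
        · subst hm
          simp [airyForm, hsum]
        · have : (m : ℕ) + (n : ℕ) ≠ 2 * d - 1 := by
            intro hc
            apply hm; apply Fin.ext
            simp [hn] at hc ⊢; omega
          simp [airyForm, this, hm]
      rw [Finset.sum_congr rfl (fun m _ => h3 m)] at h
      rw [Finset.sum_ite_eq' Finset.univ i2] at h
      simp only [Finset.mem_univ, if_true] at h
      have hc : ((((i2 : ℕ).factorial * (n : ℕ).factorial : ℕ) : ℂ) / (Real.pi : ℂ)) ≠ 0 := by
        apply div_ne_zero _ hpi
        exact_mod_cast Nat.mul_ne_zero (Nat.factorial_ne_zero _) (Nat.factorial_ne_zero _)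
      have h' := (mul_eq_zero.mp h).resolve_right hc
      simpa using h'
    · -- v (1, i2) = 0 : test against j = (0, n)
      have h := key (0, n)
      rw [Fintype.sum_prod_type, Fin.sum_univ_two] at h
      have h2 : ∀ m : Fin (2 * d), v (0, m) * airyForm d (0, m) (0, n) = 0 := by
        intro m; simp [airyForm]
      rw [Finset.sum_congr rfl (fun m _ => h2 m)] at h
      simp only [Finset.sum_const_zero, zero_add] at h
      have h3 : ∀ m : Fin (2 * d),
          v (1, m) * airyForm d (1, m) (0, n)
            = if m = i2 then v (1, m) * (-((((m : ℕ).factorial * (n : ℕ).factorial : ℕ) : ℂ) / (Real.pi : ℂ))) else 0 := by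
        intro m
        by_cases hm : m = i2
        · subst hm
          simp [airyForm, hsum]
        · have : (m : ℕ) + (n : ℕ) ≠ 2 * d - 1 := by
            intro hc
            apply hm; apply Fin.ext
            simp [hn] at hc ⊢; omega
          simp [airyForm, this, hm]
      rw [Finset.sum_congr rfl (fun m _ => h3 m)] at h
      rw [Finset.sum_ite_eq' Finset.univ i2] at h
      simp only [Finset.mem_univ, if_true] at h
      have hc : ((((i2 : ℕ).factorial * (n : ℕ).factorial : ℕ) : ℂ) / (Real.pi : ℂ)) ≠ 0 := by
        apply div_ne_zero _ hpi
        exact_mod_cast Nat.mul_ne_zero (Nat.factorial_ne_zero _) (Nat.factorial_ne_zero _)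
      have hc' : -((((i2 : ℕ).factorial * (n : ℕ).factorial : ℕ) : ℂ) / (Real.pi : ℂ)) ≠ 0 :=
        neg_ne_zero.mpr hc
      have h' := (mul_eq_zero.mp h).resolve_right hc'
      simpa using h'
end
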